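/- There exists Q such that for every even integer q_0 ≥ Q and for all k ≥ 0, f maps the annulus ann(0; 4 a_k, √(a_{k+1})) into the annulus ann(0; 4 a_{k+1}, √(a_{k+2})). -/

import Mathlib

/-!
Write `‖f z‖ = ‖z‖² · H · T`, where `H` collects the factors with `j ≤ k` and `T` those with
`j > k`. If `‖z‖ > 4 a_k`, every factor of `H` has modulus at least `3`, so `H ≥ 3 ^ q_k`,
which beats `a_{k+1} = e ^ q_k`. If `‖z‖ < √a_{k+1} = e ^ (q_k / 2)`, every factor of `H` is
at most `e ^ (q_k / 2 + 1)` and `∑_{j ≤ k} q_j ≤ (10/9) q_k`, so `H ≤ e ^ ((5/9) q_k² + O(q_k))`,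
below `√a_{k+2} = e ^ ((3/4) q_k²)`. On the tail `‖z / a_j‖ ≤ e ^ (q_k / 2 - q_{j-1})` is so
small that `|log T| ≤ ∑ 2 q_j ‖z / a_j‖ ≤ 2`.
-/

open Real Finset

lemma abs_log_norm_one_sub_le {R : Type*} [SeminormedRing R] [NormOneClass R] {w : R}
    (hw : ‖w‖ ≤ 1 / 2) : |log ‖1 - w‖| ≤ 2 * ‖w‖ := by
  have hlo : 1 - ‖w‖ ≤ ‖1 - w‖ := by simpa using norm_sub_norm_le (1 : R) w
  have hhi : ‖1 - w‖ ≤ 1 + ‖w‖ := by simpa using norm_sub_le (1 : R) w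
  have hpos : 0 < ‖1 - w‖ := by linarith
  have hinv : ‖1 - w‖⁻¹ ≤ 1 + 2 * ‖w‖ := by
    rw [inv_le_iff_one_le_mul₀' hpos]
    nlinarith [norm_nonneg w]
  rw [abs_le]
  constructor
  · linarith [one_sub_inv_le_log_of_pos hpos]
  · linarith [log_le_sub_one_of_pos hpos, norm_nonneg w]

lemma abs_log_norm_one_sub_pow_le {R : Type*} [SeminormedRing R] [NormOneClass R] [NormMulClass R]
    {w : R} (hw : ‖w‖ ≤ 1 / 2) (n : ℕ) : |log ‖(1 - w) ^ n‖| ≤ 2 * n * ‖w‖ := by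
  rw [norm_pow, log_pow, abs_mul, Nat.abs_cast, mul_comm (2 : ℝ), mul_assoc]
  exact mul_le_mul_of_nonneg_left (abs_log_norm_one_sub_le hw) n.cast_nonneg

lemma exists_hasProd_exp_of_abs_log_le {ι : Type*} {b δ : ι → ℝ} (hb : ∀ i, 0 < b i)
    (hδ : Summable δ) (h : ∀ i, |log (b i)| ≤ δ i) :
    ∃ s, |s| ≤ ∑' i, δ i ∧ HasProd b (exp s) := by
  have hlog : Summable fun i => log (b i) := hδ.of_norm_bounded h
  refine ⟨∑' i, log (b i), tsum_of_norm_bounded (f := fun i => log (b i)) hδ.hasSum h, ?_⟩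
  simpa [Function.comp_def, exp_log (hb _)] using hlog.hasSum.rexp

lemma exists_hasProd_norm_one_sub_pow {ι R : Type*} [SeminormedRing R] [NormOneClass R]
    [NormMulClass R] {w : ι → R} {n : ι → ℕ} {δ : ι → ℝ} (hδ : Summable δ)
    (hw : ∀ i, ‖w i‖ ≤ 1 / 2) (h : ∀ i, 2 * n i * ‖w i‖ ≤ δ i) :
    ∃ s, |s| ≤ ∑' i, δ i ∧ HasProd (fun i => ‖(1 - w i) ^ n i‖) (exp s) := by
  refine exists_hasProd_exp_of_abs_log_le (fun i => ?_) hδ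
    fun i => (abs_log_norm_one_sub_pow_le (hw i) (n i)).trans (h i)
  have : 1 / 2 ≤ ‖1 - w i‖ := by linarith [hw i, norm_sub_norm_le (1 : R) (w i), norm_one (α := R)]
  rw [norm_pow]; positivity

lemma norm_tprod_eq_prod_range_mul {E : Type*} [SeminormedCommRing E] [NormMulClass E]
    [NormOneClass E] {g : ℕ → E} (hg : Multipliable g) {n : ℕ} {t : ℝ}
    (ht : HasProd (fun i => ‖g (i + n)‖) t) : ‖∏' i, g i‖ = (∏ i ∈ range n, ‖g i‖) * t := by
  have hnorm : ∏' i, ‖g i‖ = ‖∏' i, g i‖ := hg.hasProd.norm.tprod_eq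
  rw [← hnorm, ← ht.tprod_eq]
  exact ht.multipliable.prod_mul_tprod_nat_mul'.symm

section Factors

variable {z : ℂ} {a : ℝ}

lemma norm_div_ofReal (ha : 0 < a) : ‖z / a‖ = ‖z‖ / a := by
  rw [norm_div, Complex.norm_real, norm_of_nonneg ha.le]

lemma three_le_norm_one_sub_div (ha : 0 < a) (hz : 4 * a ≤ ‖z‖) : 3 ≤ ‖1 - z / a‖ := by
  have h4 : 4 ≤ ‖z / a‖ := by rw [norm_div_ofReal ha, le_div_iff₀ ha]; linarith
  have := norm_sub_norm_le (z / a) 1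
  rw [norm_sub_rev, norm_one] at this
  linarith

lemma norm_one_sub_div_le (ha : 1 ≤ a) : ‖1 - z / a‖ ≤ 1 + ‖z‖ := by
  calc ‖1 - z / a‖ ≤ ‖(1 : ℂ)‖ + ‖z / a‖ := norm_sub_le _ _
    _ ≤ 1 + ‖z‖ := by
      rw [norm_one, norm_div_ofReal (by linarith)]
      gcongr
      exact div_le_self (norm_nonneg z) ha

end Factors

section Head

variable {a : ℕ → ℝ} (q : ℕ → ℕ) {z : ℂ}

lemma three_pow_le_prod_range_norm (ha : Monotone a) (hpos : ∀ j, 0 < a j) {k : ℕ}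
    (hz : 4 * a k ≤ ‖z‖) : 3 ^ q k ≤ ∏ j ∈ range (k + 1), ‖(1 - z / a j) ^ q j‖ := by
  have h3 : ∀ j ≤ k, 3 ≤ ‖1 - z / a j‖ := fun j hj =>
    three_le_norm_one_sub_div (hpos j) ((mul_le_mul_of_nonneg_left (ha hj) (by norm_num)).trans hz)
  have hinit : 1 ≤ ∏ j ∈ range k, ‖(1 - z / a j) ^ q j‖ := by
    refine one_le_prod fun j hj => ?_
    rw [norm_pow]
    exact one_le_pow₀ (by linarith [h3 j (mem_range.mp hj).le])
  rw [prod_range_succ, norm_pow]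
  exact (pow_le_pow_left₀ (by norm_num) (h3 k le_rfl) _).trans
    (le_mul_of_one_le_left (by positivity) hinit)

lemma prod_norm_le_one_add_norm_pow (ha : ∀ j, 1 ≤ a j) (s : Finset ℕ) :
    ∏ j ∈ s, ‖(1 - z / a j) ^ q j‖ ≤ (1 + ‖z‖) ^ ∑ j ∈ s, q j := by
  rw [← prod_pow_eq_pow_sum]
  refine prod_le_prod (fun j _ => norm_nonneg _) fun j _ => ?_
  rw [norm_pow]
  exact pow_le_pow_left₀ (norm_nonneg _) (norm_one_sub_div_le (ha j)) _

end Head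

section Recurrence

variable {q : ℕ → ℕ}

lemma mul_sum_range_succ_le {c : ℕ} (h : ∀ n, (c + 1) * q n ≤ q (n + 1)) (n : ℕ) :
    c * ∑ j ∈ range (n + 1), q j ≤ (c + 1) * q n := by
  induction n with
  | zero => rw [zero_add, sum_range_one]; exact Nat.mul_le_mul_right _ (Nat.le_succ c)
  | succ n ih => rw [sum_range_succ, mul_add]; linarith [h n]

lemma ten_mul_le_of_recurrence (hq : ∀ n, 2 * q (n + 1) = 3 * q n ^ 2) (h0 : 7 ≤ q 0) (n : ℕ) :
    10 * q n ≤ q (n + 1) := by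
  have h7 : ∀ n, 7 ≤ q n := by
    intro n
    induction n with
    | zero => exact h0
    | succ n ih => nlinarith [hq n]
  nlinarith [hq n, h7 n]

lemma monotone_of_recurrence (hq : ∀ n, 2 * q (n + 1) = 3 * q n ^ 2) (h0 : 7 ≤ q 0) :
    Monotone q :=
  monotone_nat_of_le_succ fun n => by linarith [ten_mul_le_of_recurrence hq h0 n]

lemma four_mul_le_of_recurrence (hq : ∀ n, 2 * q (n + 1) = 3 * q n ^ 2) (h0 : 7 ≤ q 0) (n : ℕ) :
    4 * n ≤ q n := by
  induction n with
  | zero => positivity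
  | succ n ih =>
    have := ten_mul_le_of_recurrence hq h0 n
    have := monotone_of_recurrence hq h0 (Nat.zero_le n)
    omega

end Recurrence

lemma three_mul_sq_le_exp_div_four {m : ℝ} (hm : 136 ≤ m) : 3 * m ^ 2 ≤ exp (m / 4) := by
  have h := pow_div_factorial_le_exp (m / 4) (by positivity) 4
  have h24 : ((4 : ℕ).factorial : ℝ) = 24 := by norm_num [Nat.factorial]
  rw [h24] at h
  nlinarith [sq_nonneg m, mul_le_mul hm hm (by norm_num) (by linarith)]

lemma two_mul_mul_exp_sub_le_of_recurrence {q : ℕ → ℕ} (hq : ∀ n, 2 * q (n + 1) = 3 * q n ^ 2)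
    (h0 : 136 ≤ q 0) (k i : ℕ) :
    2 * q (i + k + 1) * exp (q k / 2 - q (i + k)) ≤ (1 / 2) ^ i := by
  have hmono := monotone_of_recurrence hq (by omega)
  have hm : (136 : ℝ) ≤ q (i + k) := by exact_mod_cast h0.trans (hmono (Nat.zero_le _))
  have hkm : (q k : ℝ) ≤ q (i + k) := by exact_mod_cast hmono (Nat.le_add_left k i)
  have him : 4 * (i : ℝ) ≤ q (i + k) := by
    exact_mod_cast (Nat.mul_le_mul_left 4 (Nat.le_add_right i k)).trans
      (four_mul_le_of_recurrence hq (by omega) _)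
  have hsucc : 2 * (q (i + k + 1) : ℝ) = 3 * (q (i + k) : ℝ) ^ 2 := by exact_mod_cast hq (i + k)
  set m : ℝ := ↑(q (i + k))
  have hexp : exp (-1) ≤ 1 / 2 := by
    rw [exp_neg, one_div]
    exact inv_anti₀ (by norm_num) (by linarith [add_one_le_exp 1])
  calc 2 * q (i + k + 1) * exp (q k / 2 - q (i + k)) ≤ exp (m / 4) * exp (-(m / 2)) := by
        rw [hsucc]
        gcongr
        · exact three_mul_sq_le_exp_div_four hm
        · linarith
    _ = exp (-1) ^ i * exp (-(m / 4 - i)) := by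
        rw [← exp_nat_mul, ← exp_add, ← exp_add]; ring_nf
    _ ≤ (1 / 2) ^ i * 1 := by
        gcongr
        exact exp_le_one_iff.mpr (by linarith)
    _ = (1 / 2) ^ i := mul_one _

lemma exists_hasProd_tail {q : ℕ → ℕ} {a : ℕ → ℝ} (hq : ∀ n, 2 * q (n + 1) = 3 * q n ^ 2)
    (h0 : 136 ≤ q 0) (ha : ∀ n, a (n + 1) = exp (q n)) {z : ℂ} {k : ℕ}
    (hz : ‖z‖ ≤ exp (q k / 2)) :
    ∃ s, |s| ≤ 2 ∧ HasProd (fun i => ‖(1 - z / a (i + (k + 1))) ^ q (i + (k + 1))‖) (exp s) := by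
  have hw : ∀ i, 2 * q (i + (k + 1)) * ‖z / a (i + (k + 1))‖ ≤ (1 / 2) ^ i := fun i => by
    rw [← add_assoc, ha, norm_div_ofReal (exp_pos _)]
    calc 2 * (q (i + k + 1) : ℝ) * (‖z‖ / exp (q (i + k)))
        ≤ 2 * q (i + k + 1) * exp (q k / 2 - q (i + k)) := by rw [exp_sub]; gcongr
      _ ≤ (1 / 2) ^ i := two_mul_mul_exp_sub_le_of_recurrence hq h0 k i
  have hw_half : ∀ i, ‖z / a (i + (k + 1))‖ ≤ 1 / 2 := fun i => by
    have hq1 : (1 : ℝ) ≤ q (i + (k + 1)) := by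
      exact_mod_cast (by omega : 1 ≤ q 0).trans
        (monotone_of_recurrence hq (by omega) (Nat.zero_le _))
    have : (1 / 2 : ℝ) ^ i ≤ 1 := pow_le_one₀ (by norm_num) (by norm_num)
    nlinarith [hw i, norm_nonneg (z / a (i + (k + 1)))]
  obtain ⟨s, hs, h⟩ := exists_hasProd_norm_one_sub_pow summable_geometric_two hw_half hw
  exact ⟨s, tsum_geometric_two ▸ hs, h⟩

lemma exp_add_two_lt_four_mul_three_pow {n : ℕ} (hn : 9 ≤ n) : exp (n + 2) < 4 * 3 ^ n := by
  have he : exp 1 < 2.7182818286 := exp_one_lt_d9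
  have hn' : (9 : ℝ) ≤ n := by exact_mod_cast hn
  have hexp2 : exp 2 < 7.6 := by
    rw [show (2 : ℝ) = 1 + 1 by norm_num, exp_add]; nlinarith [exp_pos 1]
  have hbern : 1 + n * (1 / 10 : ℝ) ≤ (1 + 1 / 10) ^ n := one_add_mul_le_pow (by norm_num) n
  have hpow : ((1 + 1 / 10) * exp 1) ^ n ≤ 3 ^ n :=
    pow_le_pow_left₀ (by positivity) (by linarith) n
  rw [mul_pow, exp_one_pow] at hpow
  rw [exp_add]
  nlinarith [exp_pos n]

lemma four_mul_exp_lt_norm_sq_mul {a : ℕ → ℝ} {q : ℕ → ℕ} (ha : Monotone a)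
    (ha1 : ∀ j, 1 ≤ a j) {k : ℕ} (hk : 9 ≤ q k) {z : ℂ} (hz : 4 * a k ≤ ‖z‖) {s : ℝ}
    (hs : -2 ≤ s) :
    4 * exp (q k) < ‖z‖ ^ 2 * ((∏ j ∈ range (k + 1), ‖(1 - z / a j) ^ q j‖) * exp s) := by
  have hH := three_pow_le_prod_range_norm q ha (fun j => by linarith [ha1 j]) hz
  have hz4 : 4 ≤ ‖z‖ := by linarith [ha1 k]
  calc 4 * exp (q k) = 4 * (exp (q k + 2) * exp (-2)) := by rw [← exp_add]; ring_nf
    _ < 4 * (4 * 3 ^ q k * exp (-2)) := by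
        gcongr; exact exp_add_two_lt_four_mul_three_pow hk
    _ = 4 ^ 2 * (3 ^ q k * exp (-2)) := by ring
    _ ≤ ‖z‖ ^ 2 * ((∏ j ∈ range (k + 1), ‖(1 - z / a j) ^ q j‖) * exp s) := by gcongr

lemma norm_sq_mul_lt_exp {a : ℕ → ℝ} {q : ℕ → ℕ} (hq : ∀ n, 2 * q (n + 1) = 3 * q n ^ 2)
    (h0 : 12 ≤ q 0) (ha1 : ∀ j, 1 ≤ a j) {k : ℕ} {z : ℂ} (hz : ‖z‖ ≤ exp (q k / 2)) {s : ℝ}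
    (hs : s ≤ 2) :
    ‖z‖ ^ 2 * ((∏ j ∈ range (k + 1), ‖(1 - z / a j) ^ q j‖) * exp s) < exp (q (k + 1) / 2) := by
  set S := ∑ j ∈ range (k + 1), q j
  have hS : 9 * S ≤ 10 * q k := mul_sum_range_succ_le (ten_mul_le_of_recurrence hq (by omega)) k
  have hH := prod_norm_le_one_add_norm_pow q ha1 (range (k + 1)) (z := z)
  have h1z : 1 + ‖z‖ ≤ exp (q k / 2 + 1) := by
    rw [exp_add]
    nlinarith [add_one_le_exp 1, one_le_exp (by positivity : (0 : ℝ) ≤ q k / 2)]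
  have hexponent : (q k : ℝ) + S * (q k / 2 + 1) + 2 < q (k + 1) / 2 := by
    have h12 : (12 : ℝ) ≤ q k := by
      exact_mod_cast h0.trans (monotone_of_recurrence hq (by omega) k.zero_le)
    have hS' : 9 * (S : ℝ) ≤ 10 * q k := by exact_mod_cast hS
    have hsucc : 2 * (q (k + 1) : ℝ) = 3 * (q k : ℝ) ^ 2 := by exact_mod_cast hq k
    nlinarith
  calc ‖z‖ ^ 2 * ((∏ j ∈ range (k + 1), ‖(1 - z / a j) ^ q j‖) * exp s)
      ≤ exp (q k / 2) ^ 2 * (exp (q k / 2 + 1) ^ S * exp 2) := by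
        gcongr
        exact hH.trans (pow_le_pow_left₀ (by positivity) h1z S)
    _ = exp (q k + S * (q k / 2 + 1) + 2) := by
        rw [← exp_nat_mul, ← exp_nat_mul, ← exp_add, ← exp_add]; ring_nf
    _ < exp (q (k + 1) / 2) := exp_lt_exp.mpr hexponent

/-- for `q_0` even and large enough, `f` maps
`ann(0; 4 a_k, √(a_{k+1}))` into `ann(0; 4 a_{k+1}, √(a_{k+2}))` for all `k ≥ 0`. -/
theorem stmt_16 :
    ∃ Q : ℕ, ∀ q0 : ℕ, Even q0 → 0 < q0 → Q ≤ q0 →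
      ∀ (q : ℕ → ℕ) (a : ℕ → ℝ) (f : ℂ → ℂ),
        q 0 = q0 →
        (∀ k, 2 * q (k + 1) = 3 * q k ^ 2) →
        a 0 = Real.exp ((q0 : ℝ) / 2) →
        (∀ k, a (k + 1) = Real.exp (q k)) →
        (∀ z : ℂ, Multipliable (fun k : ℕ => (1 - z / (a k : ℂ)) ^ q k)) →
        (∀ z : ℂ, f z = z ^ 2 * ∏' k : ℕ, (1 - z / (a k : ℂ)) ^ q k) →
        ∀ k : ℕ, ∀ z : ℂ,
          4 * a k < ‖z‖ → ‖z‖ < Real.sqrt (a (k + 1)) →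
            4 * a (k + 1) < ‖f z‖ ∧
              ‖f z‖ < Real.sqrt (a (k + 2)) := by
  refine ⟨136, fun q0 _ _ hQ q a f hq0 hq ha0 ha hmult hf k z hz₁ hz₂ => ?_⟩
  subst hq0
  have hqmono : Monotone q := monotone_of_recurrence hq (by omega)
  have hamono : Monotone a := monotone_nat_of_le_succ fun n => by
    cases n with
    | zero => rw [ha0, ha]; gcongr; linarith [(q 0).cast_nonneg (α := ℝ)]
    | succ n => rw [ha, ha]; gcongr; exact hqmono n.le_succ
  have ha1 : ∀ j, 1 ≤ a j := fun j =>
    (ha0 ▸ one_le_exp (by positivity)).trans (hamono j.zero_le)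
  have hz : ‖z‖ ≤ exp (q k / 2) := by rw [exp_half, ← ha]; exact hz₂.le
  obtain ⟨s, hs, htail⟩ := exists_hasProd_tail hq hQ ha hz
  rw [abs_le] at hs
  rw [hf, norm_mul, norm_pow, norm_tprod_eq_prod_range_mul (hmult z) htail, ha, ha, ← exp_half]
  exact ⟨four_mul_exp_lt_norm_sq_mul hamono ha1 (by linarith [hqmono k.zero_le]) hz₁.le hs.1,
    norm_sq_mul_lt_exp hq (by omega) ha1 hz hs.2⟩
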